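/- Let φ be a non-degenerate (σ,ε)-sesquilinear form on V and let X be a finite-dimensional totally isotropic subspace of V. Then the codimension of X⊥ in V equals the dimension of X, and X⊥⊥ = X. -/

import Mathlib

open MulOpposite

variable {K : Type*} [DivisionRing K]

/-- `σ` is an anti-automorphism of the division ring `K`. -/
def IsAntiAuto (σ : K → K) : Prop :=
  Function.Bijective σ ∧ (∀ a b : K, σ (a + b) = σ a + σ b) ∧
    ∀ a b : K, σ (a * b) = σ b * σ a

/-- `(σ, ε)` is an admissible pair: `σ` is an anti-automorphism, `ε ≠ 0`,
`σ ε = ε⁻¹` and `σ ∘ σ` is conjugation by `ε`. -/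
def IsAdmissiblePair (σ : K → K) (ε : K) : Prop :=
  IsAntiAuto σ ∧ ε ≠ 0 ∧ σ ε = ε⁻¹ ∧ ∀ t : K, σ (σ t) = ε * t * ε⁻¹

variable {V : Type*} [AddCommGroup V] [Module Kᵐᵒᵖ V]

/-- `φ` is a reflexive `(σ, ε)`-sesquilinear form on the right `K`-vector space `V`
(a right `K`-vector space is a left `Kᵐᵒᵖ`-vector space; right scalar multiplication
of `x` by `α` is `op α • x`). -/
def IsSesq (σ : K → K) (ε : K) (φ : V → V → K) : Prop :=
  (∀ x y z : V, φ (x + y) z = φ x z + φ y z) ∧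
  (∀ x y z : V, φ x (y + z) = φ x y + φ x z) ∧
  (∀ (α : K) (x y : V), φ (op α • x) y = σ α * φ x y) ∧
  (∀ (β : K) (x y : V), φ x (op β • y) = φ x y * β) ∧
  ∀ x y : V, φ y x = σ (φ x y) * ε

/-- A subspace `S` of `V` is totally isotropic for `φ` if `φ` vanishes identically on it. -/
def IsTotIso (φ : V → V → K) (S : Submodule Kᵐᵒᵖ V) : Prop :=
  ∀ x ∈ S, ∀ y ∈ S, φ x y = 0

/-- A maximal totally isotropic subspace: totally isotropic and maximal under inclusion
among totally isotropic subspaces. -/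
def IsMaxTotIso (φ : V → V → K) (S : Submodule Kᵐᵒᵖ V) : Prop :=
  IsTotIso φ S ∧ ∀ T : Submodule Kᵐᵒᵖ V, IsTotIso φ T → S ≤ T → T = S

/-- `φ` is trace-valued: every `φ(x,x)` is of the form `t + σ(t)ε`. -/
def IsTraceValued (σ : K → K) (ε : K) (φ : V → V → K) : Prop :=
  ∀ x : V, ∃ t : K, φ x x = t + σ t * ε

/-!
Pick a basis `x₁, …, xₙ` of `X`. Non-degeneracy makes `y ↦ (φ(y, xᵢ))ᵢ` a surjective
`σ`-semilinear map `V → Kⁿ`: a vector `c` orthogonal to its image gives `∑ xᵢ cᵢ` in the radical,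
so `c = 0` by linear independence. By reflexivity its kernel is `X⊥`, which yields
`V / X⊥ ≅ Kⁿ`. Applying surjectivity to the family `x₁, …, xₙ, z` for `z ∉ X` produces
`y ∈ X⊥` with `φ(y, z) = 1`, so `z ∉ X⊥⊥`.
-/

open MulOpposite Submodule

universe u v

theorem lift_rank_quotient_ker_of_surjective {R S : Type*} {M : Type u} {N : Type v}
    [Ring R] [Ring S] [AddCommGroup M] [Module R M] [AddCommGroup N] [Module S N] (τ : R ≃+* S)
    (f : M →ₛₗ[(τ : R →+* S)] N) (hf : Function.Surjective f) :
    Cardinal.lift.{v} (Module.rank R (M ⧸ LinearMap.ker f)) =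
      Cardinal.lift.{u} (Module.rank S N) := by
  let g := (LinearMap.ker f).liftQ f le_rfl
  have hg : Function.Bijective g :=
    ⟨LinearMap.ker_eq_bot.1 (ker_liftQ_eq_bot _ _ _ le_rfl),
      LinearMap.range_eq_top.1 ((range_liftQ _ _ _).trans (LinearMap.range_eq_top.2 hf))⟩
  exact lift_rank_eq_of_equiv_equiv τ (AddEquiv.ofBijective g hg) τ.bijective (map_smulₛₗ g)

namespace IsAntiAuto

variable {σ : K → K}

noncomputable def toRingEquiv (hσ : IsAntiAuto σ) : Kᵐᵒᵖ ≃+* K where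
  toEquiv := opEquiv.symm.trans (Equiv.ofBijective σ hσ.1)
  map_add' a b := hσ.2.1 a.unop b.unop
  map_mul' a b := hσ.2.2 b.unop a.unop

theorem map_zero (hσ : IsAntiAuto σ) : σ 0 = 0 :=
  _root_.map_zero hσ.toRingEquiv

end IsAntiAuto

namespace IsSesq

variable {σ : K → K} {ε : K} {φ : V → V → K}

theorem eq_zero_symm (hφ : IsSesq σ ε φ) (hσ : IsAntiAuto σ) {x y : V} (h : φ x y = 0) :
    φ y x = 0 := by
  rw [hφ.2.2.2.2, h, hσ.map_zero, zero_mul]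

def linearMapRight (hφ : IsSesq σ ε φ) (x : V) : V →ₗ[Kᵐᵒᵖ] K where
  toFun := φ x
  map_add' := hφ.2.1 x
  map_smul' a y := hφ.2.2.2.1 a.unop x y

noncomputable def pairing (hφ : IsSesq σ ε φ) (hσ : IsAntiAuto σ) {ι : Type*} (x : ι → V) :
    V →ₛₗ[(hσ.toRingEquiv : Kᵐᵒᵖ →+* K)] (ι → K) where
  toFun y i := φ y (x i)
  map_add' y z := funext fun i => hφ.1 y z (x i)
  map_smul' a y := funext fun i => hφ.2.2.1 a.unop y (x i)

@[simp]
theorem pairing_apply (hφ : IsSesq σ ε φ) (hσ : IsAntiAuto σ) {ι : Type*} (x : ι → V) (y : V)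
    (i : ι) : hφ.pairing hσ x y i = φ y (x i) := rfl

theorem forall_mem_span_iff (hφ : IsSesq σ ε φ) (hσ : IsAntiAuto σ) {ι : Type*} (x : ι → V)
    (y : V) : (∀ v ∈ span Kᵐᵒᵖ (Set.range x), φ v y = 0) ↔ ∀ i, φ y (x i) = 0 := by
  refine ⟨fun h i => hφ.eq_zero_symm hσ (h _ (subset_span ⟨i, rfl⟩)), fun h v hv => ?_⟩
  have hle : span Kᵐᵒᵖ (Set.range x) ≤ LinearMap.ker (hφ.linearMapRight y) :=
    span_le.2 (Set.range_subset_iff.2 h)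
  exact hφ.eq_zero_symm hσ (hle hv)

theorem pairing_surjective (hφ : IsSesq σ ε φ) (hσ : IsAntiAuto σ)
    (hnd : ∀ a : V, (∀ x : V, φ a x = 0) → a = 0) {ι : Type*} [Fintype ι] {x : ι → V}
    (hx : LinearIndependent Kᵐᵒᵖ x) : Function.Surjective (hφ.pairing hσ x) := by
  classical
  rw [← LinearMap.range_eq_top]
  by_contra hne
  obtain ⟨f, hf0, hf⟩ := (LinearMap.range _).exists_le_ker_of_lt_top (lt_top_iff_ne_top.2 hne)
  set c : ι → K := fun i => f fun j => if i = j then 1 else 0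
  have hf_apply : ∀ v, f v = ∑ i, v i * c i := f.pi_apply_eq_sum_univ
  have hx₀ : ∑ i, op (c i) • x i = 0 := by
    refine hnd _ fun y => hφ.eq_zero_symm hσ ?_
    have := hf (LinearMap.mem_range_self _ y)
    rw [LinearMap.mem_ker, hf_apply] at this
    change hφ.linearMapRight y _ = 0
    simp only [map_sum, map_smul, op_smul_eq_mul]
    exact this
  have hc : c = 0 := funext fun i => by
    simpa using linearIndependent_iff'.1 hx _ _ hx₀ i (Finset.mem_univ i)
  exact hf0 (LinearMap.ext fun v => by simp [hf_apply, hc])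

theorem rank_quotient_ker_pairing (hφ : IsSesq σ ε φ) (hσ : IsAntiAuto σ)
    (hnd : ∀ a : V, (∀ x : V, φ a x = 0) → a = 0) {ι : Type*} [Fintype ι] {x : ι → V}
    (hx : LinearIndependent Kᵐᵒᵖ x) :
    Module.rank Kᵐᵒᵖ (V ⧸ LinearMap.ker (hφ.pairing hσ x)) = Fintype.card ι := by
  have h := lift_rank_quotient_ker_of_surjective _ _ (hφ.pairing_surjective hσ hnd hx)
  rw [rank_fun', Cardinal.lift_natCast] at h
  exact Cardinal.lift_eq_nat_iff.1 h

theorem mem_span_iff_forall (hφ : IsSesq σ ε φ) (hσ : IsAntiAuto σ)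
    (hnd : ∀ a : V, (∀ x : V, φ a x = 0) → a = 0) {ι : Type*} [Fintype ι] {x : ι → V}
    (hx : LinearIndependent Kᵐᵒᵖ x) (z : V) :
    z ∈ span Kᵐᵒᵖ (Set.range x) ↔ ∀ y : V, (∀ i, φ y (x i) = 0) → φ y z = 0 := by
  classical
  refine ⟨fun hz y hy => hφ.eq_zero_symm hσ ((hφ.forall_mem_span_iff hσ x y).2 hy z hz),
    fun hz => ?_⟩
  by_contra hzx
  obtain ⟨y, hy⟩ := hφ.pairing_surjective hσ hnd (hx.option hzx) (Pi.single none 1)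
  have hyz : φ y z = 1 := by simpa using congrFun hy none
  have hyx : ∀ i, φ y (x i) = 0 := fun i => by simpa using congrFun hy (some i)
  exact one_ne_zero (hyz ▸ hz y hyx)

end IsSesq

theorem stmt_4_general (σ : K → K) (ε : K) (hpair : IsAdmissiblePair σ ε)
    (φ : V → V → K) (hφ : IsSesq σ ε φ)
    (hnd : ∀ a : V, (∀ x : V, φ a x = 0) → a = 0)
    (X : Submodule Kᵐᵒᵖ V) (hXfin : FiniteDimensional Kᵐᵒᵖ ↥X)
    (Wp Wpp : Submodule Kᵐᵒᵖ V)
    (hWp : (Wp : Set V) = {y : V | ∀ x ∈ X, φ x y = 0})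
    (hWpp : (Wpp : Set V) = {z : V | ∀ y ∈ Wp, φ y z = 0}) :
    Module.rank Kᵐᵒᵖ (V ⧸ Wp) = Module.rank Kᵐᵒᵖ ↥X ∧ Wpp = X := by
  have hσ := hpair.1
  let b := Module.finBasis Kᵐᵒᵖ X
  let x : Fin (Module.finrank Kᵐᵒᵖ X) → V := fun i => b i
  have hx : LinearIndependent Kᵐᵒᵖ x := b.linearIndependent.map' X.subtype X.ker_subtype
  have hspan : span Kᵐᵒᵖ (Set.range x) = X := by
    rw [show Set.range x = X.subtype '' Set.range b from Set.range_comp _ _, span_image,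
      b.span_eq, map_subtype_top]
  have hWp_mem : ∀ y, y ∈ Wp ↔ ∀ i, φ y (x i) = 0 := fun y => by
    rw [← SetLike.mem_coe, hWp, Set.mem_ofPred_eq, ← hφ.forall_mem_span_iff hσ, hspan]
  have hWp_ker : Wp = LinearMap.ker (hφ.pairing hσ x) := by
    ext y
    rw [hWp_mem, LinearMap.mem_ker, funext_iff]
    rfl
  refine ⟨?_, ?_⟩
  · rw [hWp_ker, hφ.rank_quotient_ker_pairing hσ hnd hx, Fintype.card_fin,
      Module.finrank_eq_rank]
  · ext z
    rw [← SetLike.mem_coe, hWpp, Set.mem_ofPred_eq, ← hspan, hφ.mem_span_iff_forall hσ hnd hx]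
    simp only [hWp_mem]

/-- For a non-degenerate form `φ` and a finite-dimensional totally isotropic
subspace `X`, the codimension of `X⊥` in `V` equals the dimension of `X`, and `X⊥⊥ = X`. -/
theorem stmt_4 (σ : K → K) (ε : K) (hpair : IsAdmissiblePair σ ε)
    (φ : V → V → K) (hφ : IsSesq σ ε φ)
    (hnd : ∀ a : V, (∀ x : V, φ a x = 0) → a = 0)
    (X : Submodule Kᵐᵒᵖ V) (hX : IsTotIso φ X) (hXfin : FiniteDimensional Kᵐᵒᵖ ↥X)
    (Wp Wpp : Submodule Kᵐᵒᵖ V)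
    (hWp : (Wp : Set V) = {y : V | ∀ x ∈ X, φ x y = 0})
    (hWpp : (Wpp : Set V) = {z : V | ∀ y ∈ Wp, φ y z = 0}) :
    Module.rank Kᵐᵒᵖ (V ⧸ Wp) = Module.rank Kᵐᵒᵖ ↥X ∧ Wpp = X :=
  stmt_4_general σ ε hpair φ hφ hnd X hXfin Wp Wpp hWp hWpp
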